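/- If a hierarchical abstract normative system H is totally ordered, then the defeat relation of the argumentation framework (Arg(H), Def(H, ⪰_w)) obtained via weakest link contains no cycle among ordinary arguments; in particular the strict preference ≻_w is a strict partial order (irreflexive and transitive) on arguments. -/

import Mathlib

namespace HANSF

/-- Literals: ⊤, positive atoms and negated atoms. -/
inductive Lit (E : Type) where
  | top : Lit E
  | pos : E → Lit E
  | neg : E → Lit E
deriving DecidableEq

variable {E : Type}

/-- Complement (negation) of a literal; `⊤` is mapped to itself (junk value). -/
def Lit.compl : Lit E → Lit E
  | .top => .top
  | .pos e => .neg e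
  | .neg e => .pos e

/-- `y` is the complement of the (non-`⊤`) literal `x`. -/
def Lit.isCompl (x y : Lit E) : Prop := x ≠ .top ∧ y = x.compl

/-- A set of literals is consistent iff it contains no literal together with its negation. -/
def LitConsistent (S : Set (Lit E)) : Prop := ∀ x ∈ S, ∀ y ∈ S, ¬ x.isCompl y

/-- A norm is a pair (body, head) of literals. -/
abbrev Norm (E : Type) := Lit E × Lit E

/-- Hierarchical abstract normative system. -/
structure HANS (E : Type) [DecidableEq E] where
  N : Finset (Norm E)
  C : Finset (Lit E)
  r : Norm E → ℕ
  top_mem : Lit.top ∈ C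
  C_cons : LitConsistent (C : Set (Lit E))

variable [DecidableEq E]

/-- The HANS is totally ordered: distinct norms have distinct ranks. -/
def TotallyOrdered (H : HANS E) : Prop :=
  ∀ u ∈ H.N, ∀ v ∈ H.N, H.r u = H.r v → u = v

/-- Consecutive norms are chained: the head of each norm is the body of the next. -/
def chain : List (Norm E) → Prop
  | a :: b :: t => a.2 = b.1 ∧ chain (b :: t)
  | _ => True

/-- All literals traversed by a list of norms. -/
def litsOf : List (Norm E) → List (Lit E)
  | [] => []
  | a :: t => a.1 :: a.2 :: litsOf t

/-- A path from the context `C` with respect to the set of norms `R`: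
a nonempty chained sequence of distinct norms from `R` whose first body lies in `C`. -/
def IsPathFrom (C : Finset (Lit E)) (R : Set (Norm E)) : List (Norm E) → Prop
  | [] => False
  | u :: t => u.1 ∈ C ∧ chain (u :: t) ∧ (∀ v ∈ u :: t, v ∈ R) ∧ (u :: t).Nodup

/-- An ordinary argument: a consistent path from the context w.r.t. `N`. -/
def IsOrdArg (H : HANS E) (l : List (Norm E)) : Prop :=
  IsPathFrom H.C (↑H.N) l ∧ LitConsistent {x | x ∈ litsOf l}

/-- `x` is reachable from `C` via a path w.r.t. `R`. -/
def reach (C : Finset (Lit E)) (R : Set (Norm E)) (x : Lit E) : Prop :=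
  ∃ l u, IsPathFrom C R l ∧ l.getLast? = some u ∧ u.2 = x

/-- Arguments: context arguments and ordinary arguments. -/
inductive Arg (E : Type) where
  | ctx : Lit E → Arg E
  | ord : List (Norm E) → Arg E
deriving DecidableEq

/-- Membership in `Arg(H)`. -/
def Arg.IsArg (H : HANS E) : Arg E → Prop
  | .ctx a => a ∈ H.C
  | .ord l => IsOrdArg H l

/-- Conclusion of an argument. -/
def Arg.concl : Arg E → Lit E
  | .ctx a => a
  | .ord l => (l.getLastD (Lit.top, Lit.top)).2

def Arg.isCtx : Arg E → Prop
  | .ctx _ => True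
  | .ord _ => False

def Arg.isOrd : Arg E → Prop
  | .ctx _ => False
  | .ord _ => True

/-- `a` is a sub-argument of `b` (prefix of ordinary arguments; includes `b` itself). -/
def Arg.Sub : Arg E → Arg E → Prop
  | .ord l', .ord l => l' ≠ [] ∧ l' <+: l
  | _, _ => False

/-- Proper sub-argument. -/
def Arg.PSub (a b : Arg E) : Prop := a.Sub b ∧ a ≠ b

def ArgSet (H : HANS E) : Set (Arg E) := {a | a.IsArg H}

/-- `a` attacks `b`: some sub-argument of `b` has conclusion complementary to `concl a`. -/
def Attacks (a b : Arg E) : Prop :=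
  ∃ b', b'.Sub b ∧ Lit.isCompl (Arg.concl b') (Arg.concl a)

/-- `a` defeats `b` relative to a preference relation `pr` on arguments. -/
def Defeats (pr : Arg E → Arg E → Prop) (a b : Arg E) : Prop :=
  ∃ b', b'.Sub b ∧ Lit.isCompl (Arg.concl b') (Arg.concl a) ∧
    (a.isCtx ∨ (a.isOrd ∧ pr a b'))

/-- Weakest link (disjoint elitist) preference. -/
def wlPref (r : Norm E → ℕ) : Arg E → Arg E → Prop
  | .ord l1, .ord l2 => ∃ v ∈ l2, v ∉ l1 ∧ ∀ u ∈ l1, u ∉ l2 → r v ≤ r u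
  | _, _ => False

/-- Last link preference: compare the ranks of the top (last) norms. -/
def llPref (r : Norm E → ℕ) : Arg E → Arg E → Prop
  | .ord l1, .ord l2 => ∃ u v, l1.getLast? = some u ∧ l2.getLast? = some v ∧ r v ≤ r u
  | _, _ => False

/-- Strict preference. -/
def sPref {α : Type} (pr : α → α → Prop) (a b : α) : Prop := pr a b ∧ ¬ pr b a

section Semantics

variable {α : Type}

def ConflictFree (A : Set α) (D : α → α → Prop) (B : Set α) : Prop :=
  B ⊆ A ∧ ∀ a ∈ B, ∀ b ∈ B, ¬ D a b

def Defends (A : Set α) (D : α → α → Prop) (B : Set α) (x : α) : Prop :=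
  ∀ b ∈ A, D b x → ∃ c ∈ B, D c b

def Admissible (A : Set α) (D : α → α → Prop) (B : Set α) : Prop :=
  ConflictFree A D B ∧ ∀ a ∈ B, Defends A D B a

def Complete (A : Set α) (D : α → α → Prop) (B : Set α) : Prop :=
  Admissible A D B ∧ ∀ a ∈ A, Defends A D B a → a ∈ B

def Grounded (A : Set α) (D : α → α → Prop) (B : Set α) : Prop :=
  Complete A D B ∧ ∀ B', Complete A D B' → B ⊆ B'

def Preferred (A : Set α) (D : α → α → Prop) (B : Set α) : Prop :=
  Admissible A D B ∧ ∀ B', Admissible A D B' → B ⊆ B' → B' = B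

def Stable (A : Set α) (D : α → α → Prop) (B : Set α) : Prop :=
  ConflictFree A D B ∧ ∀ a ∈ A, a ∉ B → ∃ b ∈ B, D b a

/-- The relation `D` has a cycle inside `A`. -/
def HasCycle (A : Set α) (D : α → α → Prop) : Prop :=
  ∃ a l, (∀ x ∈ a :: l, x ∈ A) ∧ List.Chain D a l ∧
    D ((a :: l).getLast (by simp)) a

end Semantics

/-- Conclusions of the ordinary arguments in a set of arguments. -/
def ordConcls (Ex : Set (Arg E)) : Set (Lit E) :=
  {x | ∃ l, Arg.ord l ∈ Ex ∧ Arg.concl (Arg.ord l) = x}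

def Outfamily (H : HANS E) (pr : Arg E → Arg E → Prop) : Set (Set (Lit E)) :=
  {S | ∃ Ex, Stable (ArgSet H) (Defeats pr) Ex ∧ S = ordConcls Ex}

/-- Heads of a set of norms. -/
def consSet (R : Finset (Norm E)) : Finset (Lit E) := R.image Prod.snd

/-- Applicable norms: `Appl(N, C, R)`. -/
def Appl (H : HANS E) (R : Finset (Norm E)) : Finset (Norm E) :=
  (H.N \ R).filter (fun u => u.1 ∈ H.C ∪ consSet R ∧
    ¬ (u.2 ∈ H.C ∪ consSet R ∧ u.2.compl ∈ H.C ∪ consSet R))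

open scoped Classical in
/-- The applicable norms of maximal rank. -/
noncomputable def maxSel (H : HANS E) (R : Finset (Norm E)) : Finset (Norm E) :=
  (Appl H R).filter (fun u => ∀ v ∈ Appl H R, H.r v ≤ H.r u)

/-- The Greedy sequence `R_i`. -/
noncomputable def greedyR (H : HANS E) : ℕ → Finset (Norm E)
  | 0 => ∅
  | i + 1 => greedyR H i ∪ maxSel H (greedyR H i)

/-- The limit `R = ⋃ R_i` of the Greedy construction. -/
noncomputable def greedyLimit (H : HANS E) : Set (Norm E) := ⋃ i, ↑(greedyR H i)

/-- The Greedy extension `R(C)`. -/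
noncomputable def GreedySet (H : HANS E) : Set (Lit E) :=
  {x | reach H.C (greedyLimit H) x}

/-- The reduct `H^X`. -/
def reduct (H : HANS E) (X : Finset (Lit E)) : HANS E where
  N := (H.N.filter (fun u => u.1 ∈ H.C ∪ X)).image (fun u => (Lit.top, u.2))
  C := H.C
  r := fun u => (H.N.filter (fun v => v.1 ∈ H.C ∪ X ∧ v.2 = u.2)).sup H.r
  top_mem := H.top_mem
  C_cons := H.C_cons

/-- `u` is a weakest norm (of minimal rank) of the list `l`. -/
def WeakestNorm (r : Norm E → ℕ) (u : Norm E) (l : List (Norm E)) : Prop :=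
  u ∈ l ∧ ∀ v ∈ l, r u ≤ r v

/-- `l'` is the weakest sub-argument of the ordinary argument `l`. -/
def IsWeakestSub (H : HANS E) (l l' : List (Norm E)) : Prop :=
  l' ≠ [] ∧ l' <+: l ∧ ∃ u, l'.getLast? = some u ∧ WeakestNorm H.r u l

/-- `g ∈ warg(b)`: `g` is a super-argument of the weakest sub-argument of `b`. -/
def Warg (H : HANS E) (b g : Arg E) : Prop :=
  ∃ lb l', b = .ord lb ∧ IsWeakestSub H lb l' ∧ (Arg.ord l').Sub g

/-- Arguments of the expanded framework: the original arguments plus `aux`. -/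
inductive XArg (E : Type) where
  | base : Arg E → XArg E
  | aux : XArg E

/-- Defeat in the expanded framework: the original weakest-link defeats
plus the auxiliary defeats `Φ₁` and `Φ₂`. -/
def XDef (H : HANS E) : XArg E → XArg E → Prop
  | .base a, .base g =>
      Defeats (wlPref H.r) a g ∨
      (∃ b, Arg.IsArg H b ∧ Defeats (wlPref H.r) a b ∧ ¬ Warg H b a ∧
        Warg H b g ∧ g.PSub b)
  | .aux, .base g =>
      ∃ a b, Arg.IsArg H a ∧ Arg.IsArg H b ∧ Defeats (wlPref H.r) a b ∧
        Warg H b a ∧ Warg H b g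
  | _, .aux => False

def XArgSet (H : HANS E) : Set (XArg E) :=
  {x | x = .aux ∨ ∃ a, x = .base a ∧ a.IsArg H}

open scoped Classical in
/-- The Optimization construction along the priority-ordered list `T` of norms. -/
noncomputable def optFold (H : HANS E) (T : List (Norm E)) : Finset (Norm E) :=
  T.foldl (fun R u =>
    if LitConsistent ((↑H.C : Set (Lit E)) ∪ {x | reach H.C (↑(insert u R)) x})
    then insert u R else R) ∅

/-- The Optimization extension `R_n(C)`. -/
noncomputable def OptSet (H : HANS E) (T : List (Norm E)) : Set (Lit E) :=
  {x | reach H.C (↑(optFold H T)) x}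

end HANSF

/-
Under a total order the weakest-link comparison of two sets of norms only looks at the
weakest norm of their symmetric difference, so it is exactly the colexicographic order on
the sets of ranks, read with the rank order reversed. Colex is a linear order, which gives
transitivity and irreflexivity. Along a defeat the defeater's rank lies strictly below that of
the attacked sub-argument, whose norms are among those of the defeated argument, so the rank
strictly increases along defeats and no cycle can close.
-/

namespace Finset.Colex

theorem toColex_image_lt_toColex_image_iff_of_injOn {α β : Type*} [DecidableEq α]
    [LinearOrder β] {f : α → β} {S : Set α} (hf : S.InjOn f) {s t : Finset α}
    (hs : ↑s ⊆ S) (ht : ↑t ⊆ S) :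
    toColex (s.image f) < toColex (t.image f) ↔
      ∃ v ∈ t, v ∉ s ∧ ∀ u ∈ s, u ∉ t → f u ≤ f v := by
  have hinj : ∀ u ∈ s, ∀ w ∈ t, f u = f w → u = w := fun u hu w hw h =>
    hf (hs hu) (ht hw) h
  rw [toColex_lt_toColex_iff_exists_forall_lt]
  simp only [mem_image, forall_exists_index, and_imp, forall_apply_eq_imp_iff₂,
    exists_exists_and_eq_and, not_exists, not_and]
  constructor
  · rintro ⟨v, hvt, hvs, hlt⟩
    refine ⟨v, hvt, fun hv => hvs v hv rfl, fun u hu hut => (hlt u hu fun w hw h => ?_).le⟩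
    exact hut (hinj u hu w hw h.symm ▸ hw)
  · rintro ⟨v, hvt, hvs, hle⟩
    refine ⟨v, hvt, fun u hu h => hvs (hinj u hu v hvt h ▸ hu), fun u hu hut => ?_⟩
    have hut' : u ∉ t := fun h => hut u h rfl
    exact (hle u hu hut').lt_of_ne fun h => hut' (hinj u hu v hvt h ▸ hvt)

end Finset.Colex

namespace HANSF

open Finset Finset.Colex OrderDual

theorem not_hasCycle_of_lt {α : Type} {β : Type*} [Preorder β] {A : Set α}
    {D : α → α → Prop} (m : α → β) (h : ∀ x ∈ A, ∀ y ∈ A, D x y → m x < m y) :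
    ¬ HasCycle A D := by
  rintro ⟨a, l, hmem, hchain, hlast⟩
  have hlt : List.IsChain (fun x y => m x < m y) (a :: l) :=
    List.IsChain.imp_of_mem_imp (fun x y hx hy hxy => h x (hmem x hx) y (hmem y hy) hxy) hchain
  have hle {b : α} (hab : Relation.ReflTransGen (fun x y => m x < m y) a b) : m a ≤ m b := by
    induction hab with
    | refl => exact le_rfl
    | tail _ hbc ih => exact ih.trans hbc.le
  have hlast_lt : m ((a :: l).getLast (by simp)) < m a :=
    h _ (hmem _ (List.getLast_mem _)) a (hmem a List.mem_cons_self) hlast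
  exact (hle (List.relationReflTransGen_of_exists_isChain_cons l hlt rfl)).not_gt hlast_lt

variable {E : Type} [DecidableEq E]

def Arg.norms : Arg E → Finset (Norm E)
  | .ctx _ => ∅
  | .ord l => l.toFinset

/-- Ranks are reversed (`ℕᵒᵈ`) so that colex compares sets by their weakest norms. -/
def Arg.wlRank (r : Norm E → ℕ) (a : Arg E) : Colex (Finset ℕᵒᵈ) :=
  toColex (a.norms.image (toDual ∘ r))

theorem Arg.Sub.norms_subset {a b : Arg E} (h : a.Sub b) : a.norms ⊆ b.norms := by
  cases a <;> cases b <;> simp only [Arg.Sub] at h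
  exact fun u hu => List.mem_toFinset.2 (h.2.subset (List.mem_toFinset.1 hu))

theorem Arg.norms_subset_of_mem_argSet {H : HANS E} {a : Arg E} (ha : a ∈ ArgSet H) :
    ↑a.norms ⊆ (↑H.N : Set (Norm E)) := by
  rcases a with _ | _ | ⟨u, l⟩
  · simp [Arg.norms]
  · exact absurd ha.1 id
  · exact fun v hv => ha.1.2.2.1 v (List.mem_toFinset.1 hv)

theorem TotallyOrdered.injOn {H : HANS E} (hto : TotallyOrdered H) :
    Set.InjOn H.r ↑H.N :=
  fun u hu v hv h => hto u hu v hv h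

theorem wlPref_iff_wlRank_lt {r : Norm E → ℕ} {S : Set (Norm E)} (hr : S.InjOn r)
    {a b : Arg E} (ha : ↑a.norms ⊆ S) (hb : ↑b.norms ⊆ S) :
    wlPref r a b ↔ a.isOrd ∧ b.isOrd ∧ a.wlRank r < b.wlRank r := by
  rcases a with _ | l₁ <;> rcases b with _ | l₂ <;> simp only [wlPref, Arg.isOrd, false_and,
    and_false, true_and]
  rw [Arg.wlRank, Arg.wlRank,
    toColex_image_lt_toColex_image_iff_of_injOn (toDual.injective.comp_injOn hr) ha hb]
  simp [Arg.norms]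

theorem wlRank_lt_of_defeats {H : HANS E} (hto : TotallyOrdered H) {a b : Arg E}
    (ha : a ∈ ArgSet H) (hb : b ∈ ArgSet H) (hao : a.isOrd)
    (hd : Defeats (wlPref H.r) a b) : a.wlRank H.r < b.wlRank H.r := by
  obtain ⟨b', hsub, -, hctx | ⟨-, hpref⟩⟩ := hd
  · cases a <;> simp_all [Arg.isCtx, Arg.isOrd]
  have hb'b : b'.norms ⊆ b.norms := hsub.norms_subset
  have hb'N : ↑b'.norms ⊆ (↑H.N : Set (Norm E)) :=
    (coe_subset.2 hb'b).trans (Arg.norms_subset_of_mem_argSet hb)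
  calc a.wlRank H.r
      < b'.wlRank H.r :=
        ((wlPref_iff_wlRank_lt hto.injOn (Arg.norms_subset_of_mem_argSet ha) hb'N).1
          hpref).2.2
    _ ≤ b.wlRank H.r := toColex_le_toColex_of_subset (image_subset_image hb'b)

/-- for a totally ordered HANS, the weakest-link defeat relation has no
cycle among ordinary arguments, and strict weakest-link preference is a strict
partial order (irreflexive and transitive). -/
theorem weakestLink_defeat_acyclic {E : Type} [DecidableEq E] (H : HANS E)
    (hto : TotallyOrdered H) :
    ¬ HasCycle {a : Arg E | a ∈ ArgSet H ∧ a.isOrd} (Defeats (wlPref H.r)) ∧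
    (∀ a : Arg E, a ∈ ArgSet H → ¬ sPref (wlPref H.r) a a) ∧
    (∀ a b c : Arg E, a ∈ ArgSet H → b ∈ ArgSet H → c ∈ ArgSet H →
      sPref (wlPref H.r) a b → sPref (wlPref H.r) b c → sPref (wlPref H.r) a c) := by
  have hpref {a b : Arg E} (ha : a ∈ ArgSet H) (hb : b ∈ ArgSet H) :=
    wlPref_iff_wlRank_lt hto.injOn (Arg.norms_subset_of_mem_argSet ha)
      (Arg.norms_subset_of_mem_argSet hb)
  refine ⟨not_hasCycle_of_lt (Arg.wlRank H.r) fun a ha b hb hd =>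
      wlRank_lt_of_defeats hto ha.1 hb.1 ha.2 hd, fun a _ h => h.2 h.1, ?_⟩
  rintro a b c ha hb hc ⟨hab, -⟩ ⟨hbc, -⟩
  obtain ⟨hao, -, hab⟩ := (hpref ha hb).1 hab
  obtain ⟨-, hco, hbc⟩ := (hpref hb hc).1 hbc
  exact ⟨(hpref ha hc).2 ⟨hao, hco, hab.trans hbc⟩,
    fun hca => ((hpref hc ha).1 hca).2.2.asymm (hab.trans hbc)⟩

end HANSF
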